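/- Lemma (Case 1 of the proof of the paper's Claim 3.5). Let r be an order with levels on X, let (τ₀, ω₀) be a persistence pair of r, let ε > 0, and let ω̃ be an n-simplex with ω̃ ∈ OV(r, ω₀) and ω̃ ∉ SV_ε(r, τ₀, ω₀). Let τ̃ ∈ X^(n−1) satisfy τ₀ ≺_r τ̃, r̂(τ₀) ≤ r̂(τ̃) < r̂(τ₀) + ε, ω̃ ∉ K_V(G(≻_r τ̃), ω₀), and ω̃ ∈ K_V(G(⪰_r τ̃), ω₀). Denote by ω_e the n-cell having τ₀ as a face that lies in K_V(G(≻_r τ₀), ω₀), by ω_e′ the other n-cell having τ₀ as a face, and by ω₁ the ≼_r-maximum n-cell of K_V(G(≻_r τ₀), ω_e′). Suppose there exists a path P from ω₀ to ω_e in G(≻_r τ₀) none of whose vertices lies in K_V(G(≻_r τ̃), ω̃). Set η := (r̂(τ̃) − r̂(τ₀) + ε)/4, let A ⊆ X^(n−1) be the union of the set of edges of P, the singleton {τ₀}, and the set of edges of the connected component of ω₁ in G(≻_r τ₀), and let q = q(r, η, A). Then q ∈ R_ε and ω̃ ∉ OV(q, ω₀). -/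

import Mathlib

open scoped Classical

namespace StableVol

/-- A finite abstract simplicial complex of dimension `n`: a finite family of nonempty
finite subsets of the vertex set, closed under nonempty subsets, in which every element
is contained in an element of cardinality `n+1`. -/
structure NComplex (V : Type*) [DecidableEq V] (n : ℕ) where
  X : Finset (Finset V)
  nonempty_mem : ∀ σ ∈ X, σ.Nonempty
  down_closed : ∀ σ ∈ X, ∀ σ' : Finset V, σ' ⊆ σ → σ'.Nonempty → σ' ∈ X
  contained_top : ∀ σ ∈ X, ∃ ω ∈ X, σ ⊆ ω ∧ ω.card = n + 1

variable {V : Type*} [DecidableEq V] {n : ℕ}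

/-- An `n`-cell is either an `n`-simplex (`some ω`) or the formal cell `ω∞` (`none`). -/
abbrev Cell (V : Type*) := Option (Finset V)

/-- `τ` is a face of the cell `c`.  For `c = some ω` this means that `ω` is an
`n`-simplex of `X` containing `τ`; the faces of `ω∞ = none` are the `(n-1)`-simplices
having exactly one `n`-simplex coface. -/
def faceCell (C : NComplex V n) (τ : Finset V) : Cell V → Prop
  | some ω => ω ∈ C.X ∧ ω.card = n + 1 ∧ τ ⊆ ω
  | none => {ω | ω ∈ C.X ∧ ω.card = n + 1 ∧ τ ⊆ ω}.ncard = 1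

def IsCell (C : NComplex V n) : Cell V → Prop
  | some ω => ω ∈ C.X ∧ ω.card = n + 1
  | none => True

/-- Adjacency in the dual graph, restricted to the edge set `E ⊆ X^(n-1)`. -/
def adj (C : NComplex V n) (E : Set (Finset V)) (c c' : Cell V) : Prop :=
  ∃ τ ∈ E, faceCell C τ c ∧ faceCell C τ c' ∧ c ≠ c'

/-- `KV C E c₀`: the set of `n`-cells in the connected component of `c₀` in the
subgraph of the dual graph with edge set `E`. -/
def KV (C : NComplex V n) (E : Set (Finset V)) (c₀ : Cell V) : Set (Cell V) :=
  {c | Relation.ReflTransGen (adj C E) c₀ c}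

/-- Every `(n-1)`-simplex of `X` is a face of exactly two `n`-cells. -/
def TwoCofaces (C : NComplex V n) : Prop :=
  ∀ τ ∈ C.X, τ.card = n →
    ∃ c₁ c₂ : Cell V, c₁ ≠ c₂ ∧ ∀ c : Cell V, faceCell C τ c ↔ (c = c₁ ∨ c = c₂)

/-- The dual graph (with full edge set `X^(n-1)`) is connected. -/
def DualConn (C : NComplex V n) : Prop :=
  ∀ c c' : Cell V, IsCell C c → IsCell C c' →
    c' ∈ KV C {τ | τ ∈ C.X ∧ τ.card = n} c

/-- A level function: monotone with respect to strict inclusion of simplices. -/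
def IsLevelFun (C : NComplex V n) (lev : Finset V → ℝ) : Prop :=
  ∀ σ ∈ C.X, ∀ σ' ∈ C.X, σ ⊂ σ' → lev σ ≤ lev σ'

/-- `(lev, slt)` is an order with levels on `X`: `lev` is a level function and `slt`
is (the strict form of) a linear order on `X` refining both `lev` and strict
inclusion. -/
def IsOWL (C : NComplex V n) (lev : Finset V → ℝ)
    (slt : Finset V → Finset V → Prop) : Prop :=
  IsLevelFun C lev ∧
  (∀ σ ∈ C.X, ¬ slt σ σ) ∧
  (∀ σ ∈ C.X, ∀ σ' ∈ C.X, ∀ σ'' ∈ C.X, slt σ σ' → slt σ' σ'' → slt σ σ'') ∧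
  (∀ σ ∈ C.X, ∀ σ' ∈ C.X, σ ≠ σ' → slt σ σ' ∨ slt σ' σ) ∧
  (∀ σ ∈ C.X, ∀ σ' ∈ C.X, slt σ σ' → lev σ ≤ lev σ') ∧
  (∀ σ ∈ C.X, ∀ σ' ∈ C.X, σ ⊂ σ' → slt σ σ')

/-- Extension of a strict order on simplices to `n`-cells, `ω∞ = none` being the
unique maximum. -/
def cslt (slt : Finset V → Finset V → Prop) : Cell V → Cell V → Prop
  | some σ, some σ' => slt σ σ'
  | some _, none => True
  | none, _ => False

/-- `m` is the maximum cell of the set `S` with respect to the order `slt`. -/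
def IsMaxCell (slt : Finset V → Finset V → Prop) (S : Set (Cell V)) (m : Cell V) :
    Prop :=
  m ∈ S ∧ ∀ c ∈ S, c ≠ m → cslt slt c m

/-- Edge set of `G(≻ σ₀)`: the `(n-1)`-simplices strictly above `σ₀`. -/
def Egt (C : NComplex V n) (slt : Finset V → Finset V → Prop) (σ₀ : Finset V) :
    Set (Finset V) :=
  {τ | τ ∈ C.X ∧ τ.card = n ∧ slt σ₀ τ}

/-- Edge set of `G(⪰ σ₀)`. -/
def Ege (C : NComplex V n) (slt : Finset V → Finset V → Prop) (σ₀ : Finset V) :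
    Set (Finset V) :=
  {τ | τ ∈ C.X ∧ τ.card = n ∧ (τ = σ₀ ∨ slt σ₀ τ)}

/-- Edge set of `G(lev ≥ s)`. -/
def Elev (C : NComplex V n) (lev : Finset V → ℝ) (s : ℝ) : Set (Finset V) :=
  {τ | τ ∈ C.X ∧ τ.card = n ∧ s ≤ lev τ}

/-- `(τ₀, ω₀)` is a persistence pair of the order `slt`: the two `n`-cells having
`τ₀` as a face lie in distinct connected components of `G(≻ τ₀)`, and `ω₀` is the
smaller of the two maximum cells of these two components. -/
def IsPersPair (C : NComplex V n) (slt : Finset V → Finset V → Prop)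
    (τ₀ ω₀ : Finset V) : Prop :=
  τ₀ ∈ C.X ∧ τ₀.card = n ∧ ω₀ ∈ C.X ∧ ω₀.card = n + 1 ∧
  ∃ c₁ c₂ : Cell V, c₁ ≠ c₂ ∧ faceCell C τ₀ c₁ ∧ faceCell C τ₀ c₂ ∧
    c₂ ∉ KV C (Egt C slt τ₀) c₁ ∧
    ∃ m₂ : Cell V,
      IsMaxCell slt (KV C (Egt C slt τ₀) c₁) (some ω₀) ∧
      IsMaxCell slt (KV C (Egt C slt τ₀) c₂) m₂ ∧
      cslt slt (some ω₀) m₂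

/-- The optimal volume `OV(q, ω₀) = K_V(G(≻_q τ_{q,ω₀}), ω₀)`. -/
def OV (C : NComplex V n) (slt : Finset V → Finset V → Prop) (ω₀ : Finset V) :
    Set (Cell V) :=
  {c | ∃ τ, IsPersPair C slt τ ω₀ ∧ c ∈ KV C (Egt C slt τ) (some ω₀)}

/-- The stable volume `SV_ε(r, τ₀, ω₀) = K_V(G(r̂ ≥ r̂(τ₀) + ε), ω₀)`. -/
def SV (C : NComplex V n) (lev : Finset V → ℝ) (τ₀ ω₀ : Finset V) (ε : ℝ) :
    Set (Cell V) :=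
  KV C (Elev C lev (lev τ₀ + ε)) (some ω₀)

/-- `(qlev, qslt) ∈ R_ε`: an order with levels uniformly `ε/2`-close to `rlev`
satisfying the `(r, ω₀)`-order condition. -/
def InR (C : NComplex V n) (rlev : Finset V → ℝ)
    (rslt : Finset V → Finset V → Prop) (ω₀ : Finset V) (ε : ℝ)
    (qlev : Finset V → ℝ) (qslt : Finset V → Finset V → Prop) : Prop :=
  IsOWL C qlev qslt ∧ (∀ σ ∈ C.X, |qlev σ - rlev σ| < ε / 2) ∧
  (∀ σ ∈ C.X, rslt σ ω₀ → qslt σ ω₀)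

/-- `F_{ε,n}`: the `n`-simplices with level at least `lev τ₀ + ε` that precede `ω₀`. -/
def Fcells (C : NComplex V n) (lev : Finset V → ℝ)
    (slt : Finset V → Finset V → Prop) (τ₀ ω₀ : Finset V) (ε : ℝ) :
    Set (Finset V) :=
  {σ | σ ∈ C.X ∧ σ.card = n + 1 ∧ lev τ₀ + ε ≤ lev σ ∧ slt σ ω₀}

/-- `F_{ε,n-1}`: the `(n-1)`-simplices with level at least `lev τ₀ + ε` that
precede `ω₀`. -/
def Fedges (C : NComplex V n) (lev : Finset V → ℝ)
    (slt : Finset V → Finset V → Prop) (τ₀ ω₀ : Finset V) (ε : ℝ) :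
    Set (Finset V) :=
  {σ | σ ∈ C.X ∧ σ.card = n ∧ lev τ₀ + ε ≤ lev σ ∧ slt σ ω₀}

/-- `τ*(∂z)`: the `ℤ/2ℤ`-sum of the coefficients of `z` over the `n`-simplex
cofaces of `τ`. -/
def bsum (C : NComplex V n) (τ : Finset V) (z : Finset V → ZMod 2) : ZMod 2 :=
  ∑ ω ∈ C.X.filter (fun ω => ω.card = n + 1 ∧ τ ⊆ ω), z ω

/-- A feasible chain `z = ω₀ + Σ_{ω ∈ F_{ε,n}} α_ω ω` with `τ*(∂z) = 0` for all
`τ ∈ F_{ε,n-1}`. -/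
def IsFeasible (C : NComplex V n) (lev : Finset V → ℝ)
    (slt : Finset V → Finset V → Prop) (τ₀ ω₀ : Finset V) (ε : ℝ)
    (z : Finset V → ZMod 2) : Prop :=
  z ω₀ = 1 ∧
  (∀ ω : Finset V, ω ≠ ω₀ → ω ∉ Fcells C lev slt τ₀ ω₀ ε → z ω = 0) ∧
  (∀ τ ∈ Fedges C lev slt τ₀ ω₀ ε, bsum C τ z = 0)

/-- `‖z‖₀`: the number of simplices of `X` with nonzero coefficient in `z`. -/
def norm0 (C : NComplex V n) (z : Finset V → ZMod 2) : ℕ :=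
  (C.X.filter fun ω => z ω ≠ 0).card

/-- The level function of the perturbed order `q(r, η, A)`. -/
noncomputable def pertLev (C : NComplex V n) (rlev : Finset V → ℝ) (η : ℝ)
    (A : Set (Finset V)) : Finset V → ℝ :=
  fun σ => if (σ ∈ C.X ∧ σ.card = n + 1) ∨ σ ∈ A then rlev σ + η else rlev σ - η

/-- The strict order of the perturbed order `q(r, η, A)`. -/
def pertSlt (C : NComplex V n) (rlev : Finset V → ℝ)
    (rslt : Finset V → Finset V → Prop) (η : ℝ) (A : Set (Finset V)) :
    Finset V → Finset V → Prop :=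
  fun σ σ' => pertLev C rlev η A σ < pertLev C rlev η A σ' ∨
    (pertLev C rlev η A σ = pertLev C rlev η A σ' ∧ rslt σ σ')

/-- The `(n-1)`-simplices that are edges of the connected component of `c₀` in the
subgraph with edge set `E`. -/
def compEdges (C : NComplex V n) (E : Set (Finset V)) (c₀ : Cell V) :
    Set (Finset V) :=
  {τ | τ ∈ E ∧ ∃ c, faceCell C τ c ∧ c ∈ KV C E c₀}

/-- `IsPath C E c c' vs es`: `vs` is the vertex list and `es` the edge list of a walk
from `c` to `c'` in the subgraph of the dual graph with edge set `E`. -/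
inductive IsPath (C : NComplex V n) (E : Set (Finset V)) :
    Cell V → Cell V → List (Cell V) → List (Finset V) → Prop
  | nil (c : Cell V) : IsPath C E c c [c] []
  | cons {c c' c'' : Cell V} {vs : List (Cell V)} {es : List (Finset V)}
      {τ : Finset V} : τ ∈ E → faceCell C τ c → faceCell C τ c' → c ≠ c' →
      IsPath C E c' c'' vs es → IsPath C E c c'' (c :: vs) (τ :: es)


/-!
Raising the `n`-simplices and the edges of `A` by `η` and lowering every other simplex by `η`
moves no level by more than `η < ε/2` and keeps everything below `ω₀` below it. It also keeps
`(τ₀, ω₀)` a persistence pair: `P` keeps `ω_e` joined to `ω₀` in `G(≻_q τ₀)`, and the component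
of `ω₁` survives intact because all its edges were raised. An edge of `G(≻_q τ₀)` outside `A`
has `r̂`-level at least `r̂(τ₀) + 2η > r̂(τ̃)`, so it is an edge of `G(≻_r τ̃)`. No edge of `A`
touches the `q`-component of `ω̃`: `P` avoids `K_V(G(≻_r τ̃), ω̃)`, and the component of `ω₁`
is separated from that of `ω₀`. So if `ω̃` were in `OV(q, ω₀)`, then `ω₀` would lie in
`K_V(G(≻_r τ̃), ω̃)`, which is excluded.
-/

section Components

variable {C : NComplex V n} {E E' : Set (Finset V)} {τ : Finset V} {a b c : Cell V}

theorem adj_symm (h : adj C E a b) : adj C E b a :=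
  let ⟨τ, hτ, ha, hb, hne⟩ := h
  ⟨τ, hτ, hb, ha, hne.symm⟩

theorem mem_KV_self : a ∈ KV C E a := Relation.ReflTransGen.refl

theorem mem_KV_of_adj (h : adj C E a b) : b ∈ KV C E a := Relation.ReflTransGen.single h

theorem mem_KV_trans (hb : b ∈ KV C E a) (hc : c ∈ KV C E b) : c ∈ KV C E a :=
  Relation.ReflTransGen.trans hb hc

theorem mem_KV_symm (h : b ∈ KV C E a) : a ∈ KV C E b := by
  change Relation.ReflTransGen (adj C E) a b at h
  induction h with
  | refl => exact mem_KV_self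
  | tail _ hbc ih => exact mem_KV_trans (mem_KV_of_adj (adj_symm hbc)) ih

theorem KV_subset_KV_of_adj
    (h : ∀ b c, b ∈ KV C E a → b ∈ KV C E' a → adj C E b c → adj C E' b c) :
    KV C E a ⊆ KV C E' a := by
  intro c (hc : Relation.ReflTransGen (adj C E) a c)
  induction hc with
  | refl => exact mem_KV_self
  | tail hb hbc ih => exact mem_KV_trans ih (mem_KV_of_adj (h _ _ hb ih hbc))

theorem KV_mono (hE : E ⊆ E') : KV C E a ⊆ KV C E' a :=
  KV_subset_KV_of_adj fun _ _ _ _ ⟨τ, hτ, h⟩ => ⟨τ, hE hτ, h⟩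

theorem isCell_of_faceCell (h : faceCell C τ c) : IsCell C c := by
  cases c with
  | none => trivial
  | some ω => exact ⟨h.1, h.2.1⟩

theorem isCell_of_mem_KV (ha : IsCell C a) (hc : c ∈ KV C E a) : IsCell C c := by
  change Relation.ReflTransGen (adj C E) a c at hc
  induction hc with
  | refl => exact ha
  | tail _ hbc =>
    obtain ⟨τ, -, -, hc, -⟩ := hbc
    exact isCell_of_faceCell hc

theorem mem_KV_of_mem_compEdges (hτ : τ ∈ compEdges C E c) (hb : faceCell C τ b) :
    b ∈ KV C E c := by
  obtain ⟨hτE, d, hd, hdc⟩ := hτ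
  by_cases hdb : d = b
  · exact hdb ▸ hdc
  · exact mem_KV_trans hdc (mem_KV_of_adj ⟨τ, hτE, hd, hb, hdb⟩)

theorem TwoCofaces.eq_or_eq (htwo : TwoCofaces C) (hτX : τ ∈ C.X) (hτc : τ.card = n)
    (hab : a ≠ b) (ha : faceCell C τ a) (hb : faceCell C τ b) (hc : faceCell C τ c) :
    c = a ∨ c = b := by
  obtain ⟨d₁, d₂, -, hd⟩ := htwo τ hτX hτc
  rcases (hd a).1 ha with rfl | rfl <;> rcases (hd b).1 hb with rfl | rfl <;>
    rcases (hd c).1 hc with rfl | rfl <;> simp_all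

end Components

namespace IsPath

variable {C : NComplex V n} {E E' : Set (Finset V)} {τ : Finset V} {a b c : Cell V}
  {vs : List (Cell V)} {es : List (Finset V)}

theorem head_mem (h : IsPath C E a b vs es) : a ∈ vs := by
  cases h <;> simp

theorem edge_mem (h : IsPath C E a b vs es) (hτ : τ ∈ es) : τ ∈ E := by
  induction h with
  | nil => simp at hτ
  | cons hτ' _ _ _ _ ih =>
    rcases List.mem_cons.1 hτ with rfl | hτ
    exacts [hτ', ih hτ]

theorem mem_KV (h : IsPath C E a b vs es) (hE : ∀ τ ∈ es, τ ∈ E') : b ∈ KV C E' a := by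
  induction h with
  | nil => exact mem_KV_self
  | cons _ hf hf' hne _ ih =>
    exact mem_KV_trans (mem_KV_of_adj ⟨_, hE _ List.mem_cons_self, hf, hf', hne⟩)
      (ih fun τ hτ => hE τ (List.mem_cons_of_mem _ hτ))

theorem mem_of_faceCell (h : IsPath C E a b vs es) (htwo : TwoCofaces C)
    (hE : ∀ τ ∈ E, τ ∈ C.X ∧ τ.card = n) (hτ : τ ∈ es) (hc : faceCell C τ c) : c ∈ vs := by
  induction h with
  | nil => simp at hτ
  | cons hτ' hf hf' hne hrest ih =>
    rcases List.mem_cons.1 hτ with rfl | hτ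
    · rcases htwo.eq_or_eq (hE _ hτ').1 (hE _ hτ').2 hne hf hf' hc with rfl | rfl
      · exact List.mem_cons_self
      · exact List.mem_cons_of_mem _ hrest.head_mem
    · exact List.mem_cons_of_mem _ (ih hτ)

end IsPath

theorem union_compEdges_subset {C : NComplex V n} {E : Set (Finset V)} {a b c : Cell V}
    {vs : List (Cell V)} {es : List (Finset V)} (hP : IsPath C E a b vs es) (τ₀ : Finset V) :
    {τ | τ ∈ es} ∪ {τ₀} ∪ compEdges C E c ⊆ insert τ₀ E := by
  rintro τ ((hτ | rfl) | hτ)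
  exacts [Or.inr (hP.edge_mem hτ), Or.inl rfl, Or.inr hτ.1]

theorem NComplex.card_le (C : NComplex V n) {σ : Finset V} (hσ : σ ∈ C.X) : σ.card ≤ n + 1 := by
  obtain ⟨ω, -, hσω, hω⟩ := C.contained_top σ hσ
  exact hω ▸ Finset.card_le_card hσω

section Orders

variable {C : NComplex V n} {lev : Finset V → ℝ} {slt : Finset V → Finset V → Prop}
  {σ σ' : Finset V}

theorem IsOWL.irrefl (h : IsOWL C lev slt) (hσ : σ ∈ C.X) : ¬ slt σ σ := h.2.1 σ hσ

theorem IsOWL.lev_le (h : IsOWL C lev slt) (hσ : σ ∈ C.X) (hσ' : σ' ∈ C.X) (hlt : slt σ σ') :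
    lev σ ≤ lev σ' :=
  h.2.2.2.2.1 σ hσ σ' hσ' hlt

theorem IsOWL.slt_of_lev_lt (h : IsOWL C lev slt) (hσ : σ ∈ C.X) (hσ' : σ' ∈ C.X)
    (hlt : lev σ < lev σ') : slt σ σ' := by
  rcases h.2.2.2.1 σ hσ σ' hσ' (by rintro rfl; exact hlt.false) with h' | h'
  · exact h'
  · exact absurd (h.lev_le hσ' hσ h') hlt.not_ge

theorem IsOWL.cslt_asymm (h : IsOWL C lev slt) {c d : Cell V} (hc : IsCell C c)
    (hd : IsCell C d) (hcd : cslt slt c d) : ¬ cslt slt d c := by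
  cases c with
  | none => exact absurd hcd id
  | some σ =>
    cases d with
    | none => exact id
    | some σ' => exact fun hdc => h.irrefl hc.1 (h.2.2.1 σ hc.1 σ' hd.1 σ hc.1 hcd hdc)

theorem IsMaxCell.unique (h : IsOWL C lev slt) {S : Set (Cell V)} {m m' : Cell V}
    (hm : IsMaxCell slt S m) (hm' : IsMaxCell slt S m') (hS : ∀ c ∈ S, IsCell C c) : m = m' := by
  by_contra hne
  exact h.cslt_asymm (hS _ hm.1) (hS _ hm'.1) (hm'.2 m hm.1 hne) (hm.2 m' hm'.1 (Ne.symm hne))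

variable {τ τ' ω₀ : Finset V}

theorem IsPersPair.not_slt (hp : IsPersPair C slt τ ω₀) (h : IsOWL C lev slt)
    (hp' : IsPersPair C slt τ' ω₀) : ¬ slt τ τ' := by
  intro hlt
  obtain ⟨hτX, -, hω₀X, hω₀c, c₁, -, -, -, -, -, -, hmax, -, -⟩ := hp
  obtain ⟨hτ'X, hτ'c, -, -, d₁, d₂, hd, hd₁, hd₂, -, m, hmax₁, hmax₂, hω₀m⟩ := hp'
  have hsub : Egt C slt τ' ⊆ Egt C slt τ := fun σ ⟨hσX, hσc, hσ⟩ =>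
    ⟨hσX, hσc, h.2.2.1 τ hτX τ' hτ'X σ hσX hlt hσ⟩
  -- in `G(≻ τ)` the edge `τ'` joins the two `τ'`-components, so `m` meets `ω₀`'s component
  have hd₁d₂ : d₂ ∈ KV C (Egt C slt τ) d₁ := mem_KV_of_adj ⟨τ', ⟨hτ'X, hτ'c, hlt⟩, hd₁, hd₂, hd⟩
  have hm : m ∈ KV C (Egt C slt τ) c₁ :=
    mem_KV_trans hmax.1 (mem_KV_trans (mem_KV_symm (KV_mono hsub hmax₁.1))
      (mem_KV_trans hd₁d₂ (KV_mono hsub hmax₂.1)))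
  have hne : m ≠ some ω₀ := by
    rintro rfl
    exact h.irrefl hω₀X hω₀m
  exact h.cslt_asymm (c := some ω₀) ⟨hω₀X, hω₀c⟩ (isCell_of_mem_KV (isCell_of_faceCell hd₂) hmax₂.1)
    hω₀m (hmax.2 m hm hne)

theorem IsPersPair.unique (hp : IsPersPair C slt τ ω₀) (h : IsOWL C lev slt)
    (hp' : IsPersPair C slt τ' ω₀) : τ = τ' := by
  by_contra hne
  rcases h.2.2.2.1 τ hp.1 τ' hp'.1 hne with hlt | hlt
  exacts [hp.not_slt h hp' hlt, hp'.not_slt h hp hlt]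

theorem IsPersPair.OV_eq (hp : IsPersPair C slt τ ω₀) (h : IsOWL C lev slt) :
    OV C slt ω₀ = KV C (Egt C slt τ) (some ω₀) := by
  ext c
  constructor
  · rintro ⟨τ', hp', hc⟩
    rwa [hp.unique h hp']
  · exact fun hc => ⟨τ, hp, hc⟩

theorem IsPersPair.of_faces (hp : IsPersPair C slt τ ω₀) (h : IsOWL C lev slt)
    (htwo : TwoCofaces C) {ωe ωe' ω₁ : Cell V} (hfe : faceCell C τ ωe)
    (hfe' : faceCell C τ ωe') (hee : ωe ≠ ωe') (hin : ωe ∈ KV C (Egt C slt τ) (some ω₀))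
    (hω₁ : IsMaxCell slt (KV C (Egt C slt τ) ωe') ω₁) :
    ωe' ∉ KV C (Egt C slt τ) ωe ∧ IsMaxCell slt (KV C (Egt C slt τ) ωe) (some ω₀) ∧
      cslt slt (some ω₀) ω₁ := by
  obtain ⟨hτX, hτc, -, -, c₁, c₂, hc, hf₁, hf₂, hsep, m₂, hmax₁, hmax₂, hlt⟩ := hp
  obtain rfl : ωe = c₁ := by
    refine (htwo.eq_or_eq hτX hτc hc hf₁ hf₂ hfe).resolve_right ?_
    rintro rfl
    exact hsep (mem_KV_trans hmax₁.1 hin)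
  obtain rfl : ωe' = c₂ := (htwo.eq_or_eq hτX hτc hc hf₁ hf₂ hfe').resolve_left hee.symm
  obtain rfl : ω₁ = m₂ :=
    hω₁.unique h hmax₂ fun _ => isCell_of_mem_KV (isCell_of_faceCell hfe')
  exact ⟨hsep, hmax₁, hlt⟩

end Orders

section Perturbation

variable {C : NComplex V n} {rlev : Finset V → ℝ} {rslt : Finset V → Finset V → Prop}
  {η : ℝ} {A : Set (Finset V)} {σ σ' τ τ₀ : Finset V}

theorem pertLev_of_top (hσ : σ ∈ C.X) (hσc : σ.card = n + 1) :
    pertLev C rlev η A σ = rlev σ + η :=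
  if_pos (Or.inl ⟨hσ, hσc⟩)

theorem pertLev_of_mem (hσ : σ ∈ A) : pertLev C rlev η A σ = rlev σ + η :=
  if_pos (Or.inr hσ)

theorem pertLev_of_not_mem (hσ : σ ∉ A) (hσc : σ.card ≠ n + 1) :
    pertLev C rlev η A σ = rlev σ - η :=
  if_neg fun h => h.elim (fun h => hσc h.2) hσ

theorem abs_pertLev_sub_le (hη : 0 ≤ η) : |pertLev C rlev η A σ - rlev σ| ≤ η := by
  unfold pertLev
  split_ifs <;> simp [abs_of_nonneg hη]

theorem pertLev_le (hη : 0 ≤ η) : pertLev C rlev η A σ ≤ rlev σ + η := by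
  linarith [(abs_le.1 (abs_pertLev_sub_le (C := C) (A := A) (σ := σ) (rlev := rlev) hη)).2]

theorem pertSlt_of_rslt (hr : IsOWL C rlev rslt) (hη : 0 ≤ η) (hσ : σ ∈ C.X) (hσ' : σ' ∈ C.X)
    (hup : pertLev C rlev η A σ' = rlev σ' + η) (h : rslt σ σ') :
    pertSlt C rlev rslt η A σ σ' := by
  have hle : pertLev C rlev η A σ ≤ pertLev C rlev η A σ' := by
    linarith [pertLev_le (C := C) (A := A) (σ := σ) (rlev := rlev) hη, hr.lev_le hσ hσ' h]
  rcases hle.lt_or_eq with hlt | heq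
  exacts [Or.inl hlt, Or.inr ⟨heq, h⟩]

theorem cslt_pert (hr : IsOWL C rlev rslt) (hη : 0 ≤ η) {c d : Cell V} (hc : IsCell C c)
    (hd : IsCell C d) (h : cslt rslt c d) : cslt (pertSlt C rlev rslt η A) c d := by
  cases c with
  | none => exact h
  | some σ =>
    cases d with
    | none => trivial
    | some σ' => exact pertSlt_of_rslt hr hη hc.1 hd.1 (pertLev_of_top hd.1 hd.2) h

theorem IsMaxCell.pert (hr : IsOWL C rlev rslt) (hη : 0 ≤ η) {S S' : Set (Cell V)} {m : Cell V}
    (hm : IsMaxCell rslt S m) (hS' : S' ⊆ S) (hmS' : m ∈ S') (hS : ∀ c ∈ S, IsCell C c) :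
    IsMaxCell (pertSlt C rlev rslt η A) S' m :=
  ⟨hmS', fun c hc hne => cslt_pert hr hη (hS c (hS' hc)) (hS m hm.1) (hm.2 c (hS' hc) hne)⟩

theorem isLevelFun_pertLev (hr : IsOWL C rlev rslt) (hη : 0 ≤ η) (hA : ∀ τ ∈ A, τ.card = n) :
    IsLevelFun C (pertLev C rlev η A) := by
  intro σ hσ σ' hσ' hss
  have hle := hr.1 σ hσ σ' hσ' hss
  by_cases hup : (σ' ∈ C.X ∧ σ'.card = n + 1) ∨ σ' ∈ A
  · rw [show pertLev C rlev η A σ' = rlev σ' + η from if_pos hup]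
    linarith [pertLev_le (C := C) (A := A) (σ := σ) (rlev := rlev) hη]
  · -- `σ'` is lowered, and then so is its proper face `σ`, whose cardinality is below `n`
    have hσ'c : σ'.card ≤ n := by
      have := C.card_le hσ'
      have : σ'.card ≠ n + 1 := fun h => hup (Or.inl ⟨hσ', h⟩)
      omega
    have hσc : σ.card < n := (Finset.card_lt_card hss).trans_le hσ'c
    rw [show pertLev C rlev η A σ' = rlev σ' - η from if_neg hup,
      pertLev_of_not_mem (fun h => (hA σ h ▸ hσc).false) (by omega)]
    linarith

theorem isOWL_pert (hr : IsOWL C rlev rslt) (hη : 0 ≤ η) (hA : ∀ τ ∈ A, τ.card = n) :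
    IsOWL C (pertLev C rlev η A) (pertSlt C rlev rslt η A) := by
  obtain ⟨-, hirr, htr, htot, -, hsub⟩ := id hr
  refine ⟨isLevelFun_pertLev hr hη hA, ?_, ?_, ?_, ?_, ?_⟩
  · rintro σ hσ (h | ⟨-, h⟩)
    exacts [lt_irrefl _ h, hirr σ hσ h]
  · rintro σ hσ σ' hσ' σ'' hσ'' (h₁ | ⟨e₁, h₁⟩) (h₂ | ⟨e₂, h₂⟩)
    · exact Or.inl (h₁.trans h₂)
    · exact Or.inl (h₁.trans_eq e₂)
    · exact Or.inl (e₁.trans_lt h₂)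
    · exact Or.inr ⟨e₁.trans e₂, htr σ hσ σ' hσ' σ'' hσ'' h₁ h₂⟩
  · intro σ hσ σ' hσ' hne
    rcases lt_trichotomy (pertLev C rlev η A σ) (pertLev C rlev η A σ') with h | h | h
    · exact Or.inl (Or.inl h)
    · exact (htot σ hσ σ' hσ' hne).imp (fun h' => Or.inr ⟨h, h'⟩) fun h' => Or.inr ⟨h.symm, h'⟩
    · exact Or.inr (Or.inl h)
  · rintro σ - σ' - (h | ⟨h, -⟩)
    exacts [h.le, h.le]
  · intro σ hσ σ' hσ' hss
    rcases (isLevelFun_pertLev hr hη hA σ hσ σ' hσ' hss).lt_or_eq with h | h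
    exacts [Or.inl h, Or.inr ⟨h, hsub σ hσ σ' hσ' hss⟩]

theorem inR_pert (hr : IsOWL C rlev rslt) {ω₀ : Finset V} (hω₀X : ω₀ ∈ C.X)
    (hω₀c : ω₀.card = n + 1) {ε : ℝ} (hη : 0 ≤ η) (hηε : η < ε / 2)
    (hA : ∀ τ ∈ A, τ.card = n) :
    InR C rlev rslt ω₀ ε (pertLev C rlev η A) (pertSlt C rlev rslt η A) :=
  ⟨isOWL_pert hr hη hA, fun _ _ => (abs_pertLev_sub_le hη).trans_lt hηε,
    fun _ hσ h => pertSlt_of_rslt hr hη hσ hω₀X (pertLev_of_top hω₀X hω₀c) h⟩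

/-- An edge of `G(≻_q τ₀)` that was lowered has `r̂`-level at least `r̂(τ₀) + 2η`. -/
theorem mem_Egt_of_mem_Egt_pert (hr : IsOWL C rlev rslt) (hτ₀A : τ₀ ∈ A) (hτA : τ ∉ A)
    (hσ : σ ∈ C.X) (hlev : rlev σ < rlev τ₀ + 2 * η)
    (hτ : τ ∈ Egt C (pertSlt C rlev rslt η A) τ₀) : τ ∈ Egt C rslt σ := by
  obtain ⟨hτX, hτc, hq⟩ := hτ
  have hle : pertLev C rlev η A τ₀ ≤ pertLev C rlev η A τ := hq.elim le_of_lt fun h => h.1.le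
  rw [pertLev_of_mem hτ₀A, pertLev_of_not_mem hτA (by omega)] at hle
  exact ⟨hτX, hτc, hr.slt_of_lev_lt hσ hτX (by linarith)⟩

theorem mem_Egt_pert_of_mem (hr : IsOWL C rlev rslt) (hη : 0 ≤ η) (hτ₀X : τ₀ ∈ C.X)
    (hτA : τ ∈ A) (hτ : τ ∈ Egt C rslt τ₀) : τ ∈ Egt C (pertSlt C rlev rslt η A) τ₀ :=
  ⟨hτ.1, hτ.2.1, pertSlt_of_rslt hr hη hτ₀X hτ.1 (pertLev_of_mem hτA) hτ.2.2⟩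

theorem Egt_pert_subset (hr : IsOWL C rlev rslt) (hη : 0 < η) (hτ₀X : τ₀ ∈ C.X) (hτ₀A : τ₀ ∈ A)
    (hA : A ⊆ insert τ₀ (Egt C rslt τ₀)) :
    Egt C (pertSlt C rlev rslt η A) τ₀ ⊆ Egt C rslt τ₀ := by
  intro τ hτ
  by_cases hτA : τ ∈ A
  · rcases hA hτA with rfl | h
    · exact absurd hτ.2.2 (not_or.2 ⟨lt_irrefl _, fun h => hr.irrefl hτ.1 h.2⟩)
    · exact h
  · exact mem_Egt_of_mem_Egt_pert hr hτ₀A hτA hτ₀X (by linarith) hτ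

end Perturbation

section CaseOne

variable {C : NComplex V n} {rlev : Finset V → ℝ} {rslt : Finset V → Finset V → Prop}
  {η : ℝ} {A : Set (Finset V)} {τ₀ ω₀ : Finset V} {ωe ωe' ω₁ : Cell V}
  {vs : List (Cell V)} {es : List (Finset V)}

theorem isPersPair_pert (hr : IsOWL C rlev rslt) (hpair : IsPersPair C rslt τ₀ ω₀) (hη : 0 < η)
    (hfe : faceCell C τ₀ ωe) (hfe' : faceCell C τ₀ ωe') (hee : ωe ≠ ωe')
    (hsep : ωe' ∉ KV C (Egt C rslt τ₀) ωe)
    (hmax : IsMaxCell rslt (KV C (Egt C rslt τ₀) ωe) (some ω₀))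
    (hlt : cslt rslt (some ω₀) ω₁) (hω₁ : IsMaxCell rslt (KV C (Egt C rslt τ₀) ωe') ω₁)
    (hP : IsPath C (Egt C rslt τ₀) (some ω₀) ωe vs es)
    (hA : A = {τ | τ ∈ es} ∪ {τ₀} ∪ compEdges C (Egt C rslt τ₀) ω₁) :
    IsPersPair C (pertSlt C rlev rslt η A) τ₀ ω₀ := by
  obtain ⟨hτ₀X, hτ₀c, hω₀X, hω₀c, -⟩ := hpair
  have hsub : Egt C (pertSlt C rlev rslt η A) τ₀ ⊆ Egt C rslt τ₀ :=
    Egt_pert_subset hr hη hτ₀X (by simp [hA]) (hA ▸ union_compEdges_subset hP τ₀)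
  have hω₀ : some ω₀ ∈ KV C (Egt C (pertSlt C rlev rslt η A) τ₀) ωe :=
    mem_KV_symm <| hP.mem_KV fun τ hτ =>
      mem_Egt_pert_of_mem hr hη.le hτ₀X (by simp [hA, hτ]) (hP.edge_mem hτ)
  -- every edge of the component of `ω₁ = max K_V(G(≻_r τ₀), ωe')` was raised
  have hcomp : KV C (Egt C rslt τ₀) ωe' ⊆ KV C (Egt C (pertSlt C rlev rslt η A) τ₀) ωe' :=
    KV_subset_KV_of_adj fun b _ hb _ ⟨τ, hτ, hfb, hfc, hne⟩ =>
      ⟨τ, mem_Egt_pert_of_mem hr hη.le hτ₀X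
        (hA ▸ Or.inr ⟨hτ, b, hfb, mem_KV_trans (mem_KV_symm hω₁.1) hb⟩) hτ, hfb, hfc, hne⟩
  have hcells : ∀ {c}, faceCell C τ₀ c → ∀ d ∈ KV C (Egt C rslt τ₀) c, IsCell C d :=
    fun hc _ => isCell_of_mem_KV (isCell_of_faceCell hc)
  exact ⟨hτ₀X, hτ₀c, hω₀X, hω₀c, ωe, ωe', hee, hfe, hfe', fun h => hsep (KV_mono hsub h), ω₁,
    hmax.pert hr hη.le (KV_mono hsub) hω₀ (hcells hfe),
    hω₁.pert hr hη.le (KV_mono hsub) (hcomp hω₁.1) (hcells hfe'),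
    cslt_pert hr hη.le (c := some ω₀) ⟨hω₀X, hω₀c⟩ (hcells hfe' _ hω₁.1) hlt⟩

theorem KV_pert_subset (hr : IsOWL C rlev rslt) (htwo : TwoCofaces C) (hτ₀X : τ₀ ∈ C.X)
    (hη : 0 < η) {τt ωt : Finset V} (hτtX : τt ∈ C.X) (hlev : rlev τt < rlev τ₀ + 2 * η)
    (hωt : some ωt ∈ KV C (Egt C rslt τ₀) (some ω₀))
    (hin : ωe ∈ KV C (Egt C rslt τ₀) (some ω₀)) (hsep : ωe' ∉ KV C (Egt C rslt τ₀) ωe)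
    (hω₁ : ω₁ ∈ KV C (Egt C rslt τ₀) ωe')
    (hP : IsPath C (Egt C rslt τ₀) (some ω₀) ωe vs es)
    (havoid : ∀ c ∈ vs, c ∉ KV C (Egt C rslt τt) (some ωt))
    (hA : A = {τ | τ ∈ es} ∪ {τ₀} ∪ compEdges C (Egt C rslt τ₀) ω₁) :
    KV C (Egt C (pertSlt C rlev rslt η A) τ₀) (some ωt) ⊆ KV C (Egt C rslt τt) (some ωt) := by
  have hτ₀A : τ₀ ∈ A := by simp [hA]
  have hsub : Egt C (pertSlt C rlev rslt η A) τ₀ ⊆ Egt C rslt τ₀ :=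
    Egt_pert_subset hr hη hτ₀X hτ₀A (hA ▸ union_compEdges_subset hP τ₀)
  refine KV_subset_KV_of_adj fun b _ hbq hbt ⟨τ, hτ, hfb, hfc, hne⟩ =>
    ⟨τ, mem_Egt_of_mem_Egt_pert hr hτ₀A ?_ hτtX hlev hτ, hfb, hfc, hne⟩
  rw [hA]
  rintro ((hτP | rfl) | hτK)
  · exact havoid b (hP.mem_of_faceCell htwo (fun _ h => ⟨h.1, h.2.1⟩) hτP hfb) hbt
  · exact hr.irrefl hτ₀X (hsub hτ).2.2
  · -- `b` would join the `r`-components of `ωe` and `ωe'`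
    have hbe : b ∈ KV C (Egt C rslt τ₀) ωe :=
      mem_KV_trans (mem_KV_symm hin) (mem_KV_trans hωt (KV_mono hsub hbq))
    exact hsep (mem_KV_trans hbe
      (mem_KV_symm (mem_KV_trans hω₁ (mem_KV_of_mem_compEdges hτK hfb))))

end CaseOne

theorem case_one_of_claim_general
    (C : NComplex V n) (htwo : TwoCofaces C)
    (rlev : Finset V → ℝ) (rslt : Finset V → Finset V → Prop)
    (hr : IsOWL C rlev rslt)
    (τ₀ ω₀ : Finset V) (hpair : IsPersPair C rslt τ₀ ω₀)
    (ε : ℝ) (hε : 0 < ε)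
    (ωt : Finset V)
    (hOV : (some ωt : Cell V) ∈ OV C rslt ω₀)
    (τt : Finset V) (hτtX : τt ∈ C.X)
    (hτt₂ : rlev τ₀ ≤ rlev τt) (hτt₃ : rlev τt < rlev τ₀ + ε)
    (hτt₄ : (some ωt : Cell V) ∉ KV C (Egt C rslt τt) (some ω₀))
    (ωe ωe' : Cell V) (hfe : faceCell C τ₀ ωe) (hfe' : faceCell C τ₀ ωe')
    (hee : ωe ≠ ωe') (hin : ωe ∈ KV C (Egt C rslt τ₀) (some ω₀))
    (ω₁ : Cell V) (hω₁ : IsMaxCell rslt (KV C (Egt C rslt τ₀) ωe') ω₁)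
    (vs : List (Cell V)) (es : List (Finset V))
    (hP : IsPath C (Egt C rslt τ₀) (some ω₀) ωe vs es)
    (havoid : ∀ c ∈ vs, c ∉ KV C (Egt C rslt τt) (some ωt)) :
    ∀ η : ℝ, η = (rlev τt - rlev τ₀ + ε) / 4 →
      ∀ A : Set (Finset V),
        A = {τ | τ ∈ es} ∪ {τ₀} ∪ compEdges C (Egt C rslt τ₀) ω₁ →
        InR C rlev rslt ω₀ ε (pertLev C rlev η A) (pertSlt C rlev rslt η A) ∧
        (some ωt : Cell V) ∉ OV C (pertSlt C rlev rslt η A) ω₀ := by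
  intro η hη A hA
  have hη₀ : 0 < η := by rw [hη]; linarith
  obtain ⟨hτ₀X, hτ₀c, hω₀X, hω₀c, -⟩ := id hpair
  obtain ⟨hsep, hmax, hlt⟩ := hpair.of_faces hr htwo hfe hfe' hee hin hω₁
  have hAc : ∀ τ ∈ A, τ.card = n := fun τ hτ => by
    rcases (hA ▸ union_compEdges_subset hP τ₀) hτ with rfl | h
    exacts [hτ₀c, h.2.1]
  have hq := isPersPair_pert (rlev := rlev) (η := η)
    hr hpair hη₀ hfe hfe' hee hsep hmax hlt hω₁ hP hA
  refine ⟨inR_pert hr hω₀X hω₀c hη₀.le (by rw [hη]; linarith) hAc, fun hωtq => ?_⟩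
  rw [hq.OV_eq (isOWL_pert hr hη₀.le hAc)] at hωtq
  have hωt : some ωt ∈ KV C (Egt C rslt τ₀) (some ω₀) := hpair.OV_eq hr ▸ hOV
  exact hτt₄ <| mem_KV_symm <| KV_pert_subset hr htwo hτ₀X hη₀ hτtX (by rw [hη]; linarith) hωt
    hin hsep hω₁.1 hP havoid hA (mem_KV_symm hωtq)

/-- Case 1 of the proof of Claim 3.5: if there is a path `P` from
`ω₀` to `ω_e` in `G(≻_r τ₀)` avoiding `K_V(G(≻_r τ̃), ω̃)`, then the perturbed
order `q = q(r, η, A)` lies in `R_ε` and its optimal volume avoids `ω̃`. -/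
theorem case_one_of_claim
    (hn : 2 ≤ n) (C : NComplex V n) (htwo : TwoCofaces C) (hconn : DualConn C)
    (rlev : Finset V → ℝ) (rslt : Finset V → Finset V → Prop)
    (hr : IsOWL C rlev rslt)
    (τ₀ ω₀ : Finset V) (hpair : IsPersPair C rslt τ₀ ω₀)
    (ε : ℝ) (hε : 0 < ε)
    (ωt : Finset V) (hωtX : ωt ∈ C.X) (hωtc : ωt.card = n + 1)
    (hOV : (some ωt : Cell V) ∈ OV C rslt ω₀)
    (hSV : (some ωt : Cell V) ∉ SV C rlev τ₀ ω₀ ε)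
    (τt : Finset V) (hτtX : τt ∈ C.X) (hτtc : τt.card = n)
    (hτt₁ : rslt τ₀ τt) (hτt₂ : rlev τ₀ ≤ rlev τt) (hτt₃ : rlev τt < rlev τ₀ + ε)
    (hτt₄ : (some ωt : Cell V) ∉ KV C (Egt C rslt τt) (some ω₀))
    (hτt₅ : (some ωt : Cell V) ∈ KV C (Ege C rslt τt) (some ω₀))
    (ωe ωe' : Cell V) (hfe : faceCell C τ₀ ωe) (hfe' : faceCell C τ₀ ωe')
    (hee : ωe ≠ ωe') (hin : ωe ∈ KV C (Egt C rslt τ₀) (some ω₀))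
    (ω₁ : Cell V) (hω₁ : IsMaxCell rslt (KV C (Egt C rslt τ₀) ωe') ω₁)
    (vs : List (Cell V)) (es : List (Finset V))
    (hP : IsPath C (Egt C rslt τ₀) (some ω₀) ωe vs es) (hnd : vs.Nodup)
    (havoid : ∀ c ∈ vs, c ∉ KV C (Egt C rslt τt) (some ωt)) :
    ∀ η : ℝ, η = (rlev τt - rlev τ₀ + ε) / 4 →
      ∀ A : Set (Finset V),
        A = {τ | τ ∈ es} ∪ {τ₀} ∪ compEdges C (Egt C rslt τ₀) ω₁ →
        InR C rlev rslt ω₀ ε (pertLev C rlev η A) (pertSlt C rlev rslt η A) ∧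
        (some ωt : Cell V) ∉ OV C (pertSlt C rlev rslt η A) ω₀ :=
  case_one_of_claim_general C htwo rlev rslt hr τ₀ ω₀ hpair ε hε ωt hOV τt hτtX hτt₂ hτt₃ hτt₄ ωe
    ωe' hfe hfe' hee hin ω₁ hω₁ vs es hP havoid

end StableVol
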